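/- Fix d ≥ 1, a cost matrix C ∈ ℝ^{d×d}, ε > 0, and probability vectors μ₁, μ₂ ∈ ℝ^d with strictly positive entries. Let Π(μ₁,μ₂) := { M ∈ ℝ^{d×d} : M ≥ 0 entrywise, M𝟙 = μ₁, Mᵀ𝟙 = μ₂ } and f_ε(M) := ∑_{i,j}( C_{ij} M_{ij} + ε M_{ij} log M_{ij} ). If M* ∈ Π(μ₁,μ₂) has strictly positive entries and minimizes f_ε over Π(μ₁,μ₂), then M* is a diagonal scaling of the Gibbs kernel: there exist vectors v₁, v₂ ∈ ℝ^d with strictly positive entries such that M*_{ij} = (v₁)_i · exp(−C_{ij}/ε) · (v₂)_j for all i, j; equivalently, M* = diag(v₁) Γ diag(v₂) with Γ_{ij} := exp(−C_{ij}/ε). -/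

import Mathlib

/-!
At an entrywise positive point `M` of `Π(μ₁,μ₂)`, every direction `u vᵀ` with `∑ u = ∑ v = 0`
keeps the marginals and, for small steps, positivity; so the directional derivative
`∑ G_{ab} u_a v_b` of `f_ε` at the minimizer vanishes, `G = C + ε (log M + 1)` being the
gradient. Taking `u = e_i - e_k`, `v = e_j - e_l` gives `G_{ij} + G_{kl} = G_{il} + G_{kj}`,
hence `G_{ij} = a_i + b_j`, and solving for `M_{ij}` gives the diagonal scaling.
-/

/-- The transport polytope `Π(μ₁,μ₂)` of couplings of two probability vectors. -/
def transportPolytope (d : ℕ) (μ₁ μ₂ : Fin d → ℝ) : Set (Matrix (Fin d) (Fin d) ℝ) :=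
  {M | (∀ i j, 0 ≤ M i j) ∧ (∀ i, ∑ j, M i j = μ₁ i) ∧ (∀ j, ∑ i, M i j = μ₂ j)}

/-- The Sinkhorn objective `f_ε(M) = ∑_{i,j} (C_{ij} M_{ij} + ε M_{ij} log M_{ij})`. -/
noncomputable def sinkhornObjective (d : ℕ) (C : Matrix (Fin d) (Fin d) ℝ) (ε : ℝ)
    (M : Matrix (Fin d) (Fin d) ℝ) : ℝ :=
  ∑ i, ∑ j, (C i j * M i j + ε * (M i j * Real.log (M i j)))

open Filter Topology Matrix

namespace Matrix

theorem sum_vecMulVec_row_eq_zero {ι κ : Type*} [Fintype κ] (u : ι → ℝ) {v : κ → ℝ}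
    (hv : ∑ b, v b = 0) (a : ι) :
    ∑ b, vecMulVec u v a b = 0 := by
  simp [vecMulVec_apply, ← Finset.mul_sum, hv]

theorem sum_vecMulVec_col_eq_zero {ι κ : Type*} [Fintype ι] {u : ι → ℝ} (v : κ → ℝ)
    (hu : ∑ a, u a = 0) (b : κ) :
    ∑ a, vecMulVec u v a b = 0 := by
  simp [vecMulVec_apply, ← Finset.sum_mul, hu]

theorem sum_mul_vecMulVec_single_sub_single {ι κ : Type*} [Fintype ι] [Fintype κ]
    [DecidableEq ι] [DecidableEq κ] (g : Matrix ι κ ℝ)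
    (i k : ι) (j l : κ) :
    ∑ a, ∑ b,
        g a b * vecMulVec (Pi.single i 1 - Pi.single k 1) (Pi.single j 1 - Pi.single l 1) a b
      = g i j - g i l - g k j + g k l := by
  simp [vecMulVec_apply, Pi.single_apply, mul_sub, Finset.sum_sub_distrib]
  ring

theorem exists_eq_add_of_add_eq_add {ι κ : Type*} [Nonempty ι] [Nonempty κ] {g : Matrix ι κ ℝ}
    (hg : ∀ i j k l, g i j + g k l = g i l + g k j) :
    ∃ (a : ι → ℝ) (b : κ → ℝ), ∀ i j, g i j = a i + b j := by
  obtain ⟨i₀⟩ := ‹Nonempty ι›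
  obtain ⟨j₀⟩ := ‹Nonempty κ›
  exact ⟨fun i => g i j₀, fun j => g i₀ j - g i₀ j₀, fun i j => by linarith [hg i j i₀ j₀]⟩

end Matrix

noncomputable def sinkhornGradient (d : ℕ) (C : Matrix (Fin d) (Fin d) ℝ) (ε : ℝ)
    (M : Matrix (Fin d) (Fin d) ℝ) : Matrix (Fin d) (Fin d) ℝ :=
  Matrix.of fun i j => C i j + ε * (Real.log (M i j) + 1)

section FirstOrder

variable {d : ℕ} {M : Matrix (Fin d) (Fin d) ℝ}

theorem hasDerivAt_sinkhornObjective_add_smul (C : Matrix (Fin d) (Fin d) ℝ) (ε : ℝ)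
    (hpos : ∀ i j, 0 < M i j) (E : Matrix (Fin d) (Fin d) ℝ) :
    HasDerivAt (fun t : ℝ => sinkhornObjective d C ε (M + t • E))
      (∑ i, ∑ j, sinkhornGradient d C ε M i j * E i j) 0 := by
  simp only [sinkhornObjective, sinkhornGradient, Matrix.of_apply]
  refine HasDerivAt.fun_sum fun i _ => HasDerivAt.fun_sum fun j _ => ?_
  have hline : HasDerivAt (fun t : ℝ => (M + t • E) i j) (E i j) 0 := by
    simpa using (hasDerivAt_mul_const (E i j)).const_add (M i j)
  have hxlogx : HasDerivAt (fun x : ℝ => x * Real.log x) (Real.log (M i j) + 1)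
      ((M + (0 : ℝ) • E) i j) := by
    simpa using Real.hasDerivAt_mul_log (hpos i j).ne'
  convert (hline.const_mul (C i j)).add ((hxlogx.comp 0 hline).const_mul ε) using 1
  · funext t
    simp only [Pi.add_apply, Function.comp_apply]
  · ring

theorem eventually_add_smul_vecMulVec_mem_transportPolytope {μ₁ μ₂ : Fin d → ℝ}
    (hM : M ∈ transportPolytope d μ₁ μ₂) (hpos : ∀ i j, 0 < M i j) {u v : Fin d → ℝ}
    (hu : ∑ a, u a = 0) (hv : ∑ b, v b = 0) :
    ∀ᶠ t in 𝓝 (0 : ℝ), M + t • vecMulVec u v ∈ transportPolytope d μ₁ μ₂ := by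
  have hcont : ∀ i j, Continuous fun t : ℝ => (M + t • vecMulVec u v) i j := fun i j => by
    simp only [Matrix.add_apply, Matrix.smul_apply, smul_eq_mul]
    fun_prop
  have hnonneg : ∀ᶠ t in 𝓝 (0 : ℝ), ∀ i j, 0 ≤ (M + t • vecMulVec u v) i j :=
    eventually_all.2 fun i => eventually_all.2 fun j =>
      ((hcont i j).tendsto' 0 (M i j) (by simp)).eventually (eventually_ge_nhds (hpos i j))
  filter_upwards [hnonneg] with t ht
  refine ⟨ht, fun i => ?_, fun j => ?_⟩
  · simp [Finset.sum_add_distrib, ← Finset.mul_sum, sum_vecMulVec_row_eq_zero u hv, hM.2.1 i]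
  · simp [Finset.sum_add_distrib, ← Finset.mul_sum, sum_vecMulVec_col_eq_zero v hu, hM.2.2 j]

theorem sinkhornGradient_add_eq_add_of_minimizer {C : Matrix (Fin d) (Fin d) ℝ} {ε : ℝ}
    {μ₁ μ₂ : Fin d → ℝ} (hM : M ∈ transportPolytope d μ₁ μ₂) (hpos : ∀ i j, 0 < M i j)
    (hmin : ∀ M' ∈ transportPolytope d μ₁ μ₂,
      sinkhornObjective d C ε M ≤ sinkhornObjective d C ε M') (i j k l : Fin d) :
    sinkhornGradient d C ε M i j + sinkhornGradient d C ε M k l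
      = sinkhornGradient d C ε M i l + sinkhornGradient d C ε M k j := by
  set u : Fin d → ℝ := Pi.single i 1 - Pi.single k 1
  set v : Fin d → ℝ := Pi.single j 1 - Pi.single l 1
  have hu : ∑ a, u a = 0 := by simp [u]
  have hv : ∑ b, v b = 0 := by simp [v]
  have hlocal :
      IsLocalMin (fun t : ℝ => sinkhornObjective d C ε (M + t • vecMulVec u v)) 0 := by
    filter_upwards [eventually_add_smul_vecMulVec_mem_transportPolytope hM hpos hu hv] with t ht
    simpa using hmin _ ht
  have hderiv := hlocal.hasDerivAt_eq_zero (hasDerivAt_sinkhornObjective_add_smul C ε hpos _)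
  rw [sum_mul_vecMulVec_single_sub_single] at hderiv
  linarith

end FirstOrder

theorem stmt_9_general (d : ℕ) (hd : 1 ≤ d) (C : Matrix (Fin d) (Fin d) ℝ) (ε : ℝ) (hε : 0 < ε)
    (μ₁ μ₂ : Fin d → ℝ)
    (Mstar : Matrix (Fin d) (Fin d) ℝ)
    (hMmem : Mstar ∈ transportPolytope d μ₁ μ₂)
    (hMpos : ∀ i j, 0 < Mstar i j)
    (hMmin : ∀ M' ∈ transportPolytope d μ₁ μ₂,
        sinkhornObjective d C ε Mstar ≤ sinkhornObjective d C ε M') :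
    ∃ v₁ v₂ : Fin d → ℝ, (∀ i, 0 < v₁ i) ∧ (∀ j, 0 < v₂ j) ∧
      (∀ i j, Mstar i j = v₁ i * Real.exp (-C i j / ε) * v₂ j)
      ∧ Mstar = Matrix.diagonal v₁ * Matrix.of (fun i j => Real.exp (-C i j / ε))
          * Matrix.diagonal v₂ := by
  have : Nonempty (Fin d) := ⟨⟨0, hd⟩⟩
  obtain ⟨a, b, hab⟩ := exists_eq_add_of_add_eq_add
    (sinkhornGradient_add_eq_add_of_minimizer hMmem hMpos hMmin)
  have hform : ∀ i j, Mstar i j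
      = Real.exp (a i / ε - 1) * Real.exp (-C i j / ε) * Real.exp (b j / ε) := by
    intro i j
    have hlog : Real.log (Mstar i j) = a i / ε - 1 + -C i j / ε + b j / ε := by
      have hG := hab i j
      simp only [sinkhornGradient, Matrix.of_apply] at hG
      field_simp
      linarith
    rw [← Real.exp_add, ← Real.exp_add, ← hlog, Real.exp_log (hMpos i j)]
  refine ⟨_, _, fun i => Real.exp_pos _, fun j => Real.exp_pos _, hform, ?_⟩
  ext i j
  rw [Matrix.mul_diagonal, Matrix.diagonal_mul, Matrix.of_apply, hform]

/-- An entrywise positive minimizer `M*` of the entropy-regularized optimal transport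
objective over `Π(μ₁,μ₂)` (with strictly positive marginals) is a diagonal scaling of
the Gibbs kernel: `M*_{ij} = (v₁)_i exp(−C_{ij}/ε) (v₂)_j` for some entrywise positive
vectors `v₁, v₂`, i.e. `M* = diag(v₁) Γ diag(v₂)` with `Γ_{ij} = exp(−C_{ij}/ε)`. -/
theorem stmt_9 (d : ℕ) (hd : 1 ≤ d) (C : Matrix (Fin d) (Fin d) ℝ) (ε : ℝ) (hε : 0 < ε)
    (μ₁ μ₂ : Fin d → ℝ) (hμ₁ : ∀ i, 0 < μ₁ i) (hμ₂ : ∀ i, 0 < μ₂ i)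
    (hs₁ : ∑ i, μ₁ i = 1) (hs₂ : ∑ i, μ₂ i = 1)
    (Mstar : Matrix (Fin d) (Fin d) ℝ)
    (hMmem : Mstar ∈ transportPolytope d μ₁ μ₂)
    (hMpos : ∀ i j, 0 < Mstar i j)
    (hMmin : ∀ M' ∈ transportPolytope d μ₁ μ₂,
        sinkhornObjective d C ε Mstar ≤ sinkhornObjective d C ε M') :
    ∃ v₁ v₂ : Fin d → ℝ, (∀ i, 0 < v₁ i) ∧ (∀ j, 0 < v₂ j) ∧
      (∀ i j, Mstar i j = v₁ i * Real.exp (-C i j / ε) * v₂ j)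
      ∧ Mstar = Matrix.diagonal v₁ * Matrix.of (fun i j => Real.exp (-C i j / ε))
          * Matrix.diagonal v₂ :=
  stmt_9_general d hd C ε hε μ₁ μ₂ Mstar hMmem hMpos hMmin
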